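/- Let a < b, let f : [a-h,b] → ℂⁿ have property (A) with f(t) = 0 on [a-h,a), and let q : [a,b] → ℂ be continuous. Then the map g : [a-h,b] → ℂⁿ defined by g(t) = ∫_{(a,t)} q(s) f(t-s+a) dm(s) for a < t ≤ b and g(t) = 0 for a-h ≤ t ≤ a is continuous. -/

import Mathlib

/-!
Substituting `s ↦ t + a - s` turns `g t` into `∫_{(a,t)} q (t + a - s) • f s ds`, so `t`
enters only through the upper endpoint and through the continuous factor `q`. A function with
property (A) is a bounded Borel function and `q` is bounded on `[a, b]`, so dominated
convergence applies: for every `s` other than the limit point `t₀` the integrand converges.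
-/

open MeasureTheory Filter Topology

/-- Property (A): pointwise limit of a uniformly bounded sequence of continuous maps. -/
def PropA {X : Type*} [TopologicalSpace X] {E : Type*} [NormedAddCommGroup E]
    (φ : X → E) : Prop :=
  ∃ f : ℕ → X → E, (∀ m, Continuous (f m)) ∧ (∃ C : ℝ, ∀ m x, ‖f m x‖ ≤ C) ∧
    ∀ x, Tendsto (fun m => f m x) atTop (𝓝 (φ x))

open Set

namespace PropA

variable {X E : Type*} [TopologicalSpace X] [NormedAddCommGroup E] {φ : X → E}

theorem exists_bound (hφ : PropA φ) : ∃ C, ∀ x, ‖φ x‖ ≤ C := by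
  obtain ⟨f, -, ⟨C, hC⟩, hlim⟩ := hφ
  exact ⟨C, fun x => le_of_tendsto (hlim x).norm (Eventually.of_forall fun m => hC m x)⟩

theorem stronglyMeasurable [MeasurableSpace X] [OpensMeasurableSpace X]
    [SecondCountableTopologyEither X E] (hφ : PropA φ) : StronglyMeasurable φ := by
  obtain ⟨f, hf, -, hlim⟩ := hφ
  exact stronglyMeasurable_of_tendsto atTop (fun m => (hf m).stronglyMeasurable)
    (tendsto_pi_nhds.mpr hlim)

end PropA

theorem aestronglyMeasurable_restrict_of_subtype {α β : Type*} [MeasurableSpace α]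
    [TopologicalSpace β] {μ : Measure α} {s : Set α} (hs : MeasurableSet s) {f : α → β}
    (hf : StronglyMeasurable fun x : s => f x) : AEStronglyMeasurable f (μ.restrict s) := by
  rw [← map_comap_subtype_coe hs, (MeasurableEmbedding.subtype_coe hs).aestronglyMeasurable_map_iff]
  exact hf.aestronglyMeasurable

section

variable {E : Type*} [NormedAddCommGroup E]

theorem tendsto_indicator_Ioo_of_ne {k : ℝ → ℝ → E} {l : Filter ℝ} {a s t₀ : ℝ}
    (hl : l ≤ 𝓝 t₀) (hs : s ≠ t₀)
    (hk : s ∈ Ioo a t₀ → Tendsto (fun t => k t s) l (𝓝 (k t₀ s))) :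
    Tendsto (fun t => (Ioo a t).indicator (k t) s) l
      (𝓝 ((Ioo a t₀).indicator (k t₀) s)) := by
  -- Near `t₀` the condition `s < t` does not change, since `s ≠ t₀`.
  have hside : ∀ᶠ t in l, (s ∈ Ioo a t ↔ s ∈ Ioo a t₀) := by
    rcases hs.lt_or_gt with hlt | hgt
    · filter_upwards [hl (Ioi_mem_nhds hlt)] with t ht
      simp only [mem_Ioo, hlt, ht.out, and_true]
    · filter_upwards [hl (Iio_mem_nhds hgt)] with t ht
      simp only [mem_Ioo, ht.out.not_gt, hgt.not_gt, and_false]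
  by_cases hmem : s ∈ Ioo a t₀
  · rw [indicator_of_mem hmem]
    refine (hk hmem).congr' ?_
    filter_upwards [hside] with t ht
    rw [indicator_of_mem (ht.mpr hmem)]
  · rw [indicator_of_notMem hmem]
    refine tendsto_const_nhds.congr' ?_
    filter_upwards [hside] with t ht
    rw [indicator_of_notMem (fun h => hmem (ht.mp h))]

variable [NormedSpace ℝ E]

theorem setIntegral_Ioo_comp_add_sub (φ : ℝ → E) (a t : ℝ) :
    ∫ s in Ioo a t, φ (t + a - s) = ∫ s in Ioo a t, φ s := by
  rcases le_or_gt a t with hat | hta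
  · rw [← integral_Ioc_eq_integral_Ioo, ← integral_Ioc_eq_integral_Ioo,
      ← intervalIntegral.integral_of_le hat, ← intervalIntegral.integral_of_le hat,
      intervalIntegral.integral_comp_sub_left]
    simp
  · simp [Ioo_eq_empty_of_le hta.le]

theorem continuousWithinAt_setIntegral_Ioo_of_dominated {k : ℝ → ℝ → E} {bound : ℝ → ℝ}
    {S : Set ℝ} {a t₀ : ℝ}
    (hk_meas : ∀ᶠ t in 𝓝[S] t₀, AEStronglyMeasurable (k t) (volume.restrict (Ioo a t)))
    (h_bound : ∀ᶠ t in 𝓝[S] t₀, ∀ s ∈ Ioo a t, ‖k t s‖ ≤ bound s)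
    (bound_nonneg : 0 ≤ bound) (bound_integrable : Integrable bound)
    (h_lim : ∀ s ∈ Ioo a t₀, Tendsto (fun t => k t s) (𝓝[S] t₀) (𝓝 (k t₀ s))) :
    ContinuousWithinAt (fun t => ∫ s in Ioo a t, k t s) S t₀ := by
  simp_rw [ContinuousWithinAt, ← integral_indicator measurableSet_Ioo]
  refine tendsto_integral_filter_of_dominated_convergence bound ?_ ?_ bound_integrable ?_
  · filter_upwards [hk_meas] with t ht
    exact (aestronglyMeasurable_indicator_iff measurableSet_Ioo).mpr ht
  · filter_upwards [h_bound] with t ht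
    refine Eventually.of_forall fun s => ?_
    by_cases hs : s ∈ Ioo a t
    · simpa only [indicator_of_mem hs] using ht s hs
    · rw [indicator_of_notMem hs, norm_zero]
      exact bound_nonneg s
  · filter_upwards [volume.ae_ne t₀] with s hs
    exact tendsto_indicator_Ioo_of_ne nhdsWithin_le_nhds hs (h_lim s)

theorem continuousOn_setIntegral_Ioo_comp_add_sub_smul {𝕜 : Type*} [NormedField 𝕜]
    [NormedSpace 𝕜 E] {q : ℝ → 𝕜} {F : ℝ → E} {a b C : ℝ} (hq : ContinuousOn q (Icc a b))
    (hF_meas : AEStronglyMeasurable F (volume.restrict (Ioo a b)))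
    (hF_bound : ∀ s ∈ Ioo a b, ‖F s‖ ≤ C) :
    ContinuousOn (fun t => ∫ s in Ioo a t, q (t + a - s) • F s) (Iic b) := by
  obtain ⟨M, hM⟩ := isCompact_Icc.exists_bound_of_continuousOn hq
  have hmaps : ∀ {t s}, t ≤ b → s ∈ Ioo a t → t + a - s ∈ Icc a b := fun ht hs =>
    ⟨by linarith [hs.2], by linarith [hs.1]⟩
  intro t₀ ht₀
  refine continuousWithinAt_setIntegral_Ioo_of_dominated
    (bound := (Ioo a b).indicator fun _ => M * C) ?_ ?_ ?_ ?_ ?_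
  · filter_upwards [self_mem_nhdsWithin] with t (ht : t ≤ b)
    have hq' : ContinuousOn (fun s => q (t + a - s)) (Ioo a t) :=
      hq.comp (by fun_prop) fun s hs => hmaps ht hs
    exact (hq'.aestronglyMeasurable measurableSet_Ioo).smul
      (hF_meas.mono_set (Ioo_subset_Ioo_right ht))
  · filter_upwards [self_mem_nhdsWithin] with t (ht : t ≤ b) s hs
    have hsb : s ∈ Ioo a b := ⟨hs.1, hs.2.trans_le ht⟩
    rw [indicator_of_mem hsb, norm_smul]
    exact mul_le_mul (hM _ (hmaps ht hs)) (hF_bound s hsb) (norm_nonneg _)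
      ((norm_nonneg _).trans (hM _ (hmaps ht hs)))
  · refine indicator_nonneg fun s hs => mul_nonneg ?_ ((norm_nonneg _).trans (hF_bound s hs))
    exact (norm_nonneg _).trans (hM a (left_mem_Icc.2 (hs.1.trans hs.2).le))
  · exact (integrableOn_const measure_Ioo_lt_top.ne).integrable_indicator measurableSet_Ioo
  · intro s hs
    have hq_at : ContinuousAt q (t₀ + a - s) :=
      hq.continuousAt (Icc_mem_nhds (by linarith [hs.2]) (by linarith [hs.1, ht₀.out]))
    have h_arg : Tendsto (fun t => t + a - s) (𝓝[Iic b] t₀) (𝓝 (t₀ + a - s)) :=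
      ((by fun_prop : Continuous fun t => t + a - s).tendsto t₀).mono_left nhdsWithin_le_nhds
    exact (hq_at.tendsto.comp h_arg).smul_const (F s)

end

theorem stmt_11_general (n : ℕ) (h : ℝ) (hh : 0 < h) (a b : ℝ)
    (f : ℝ → Fin n → ℂ) (hfA : PropA fun x : Set.Icc (a - h) b => f ↑x)
    (q : ℝ → ℂ) (hq : ContinuousOn q (Set.Icc a b)) :
    ContinuousOn
      (fun t => if a < t then (∫ s in Set.Ioo a t, q s • f (t - s + a)) else 0)
      (Set.Icc (a - h) b) := by
  obtain ⟨C, hC⟩ := hfA.exists_bound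
  have h_sub : Ioo a b ⊆ Icc (a - h) b := fun s hs => ⟨by linarith [hs.1], hs.2.le⟩
  have hf_meas : AEStronglyMeasurable f (volume.restrict (Ioo a b)) :=
    (aestronglyMeasurable_restrict_of_subtype measurableSet_Icc hfA.stronglyMeasurable).mono_set
      h_sub
  have hg : (fun t => if a < t then (∫ s in Ioo a t, q s • f (t - s + a)) else 0) =
      fun t => ∫ s in Ioo a t, q (t + a - s) • f s := by
    funext t
    split_ifs with hat
    · rw [← setIntegral_Ioo_comp_add_sub]
      simp only [show ∀ s, t - (t + a - s) + a = s from fun s => by ring]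
    · simp [Ioo_eq_empty hat]
  rw [hg]
  exact (continuousOn_setIntegral_Ioo_comp_add_sub_smul hq hf_meas
    fun s hs => hC ⟨s, h_sub hs⟩).mono Icc_subset_Iic_self

/-- For `a < b`, `f : [a-h,b] → ℂⁿ` with property (A) vanishing on
`[a-h,a)`, and continuous `q : [a,b] → ℂ`, the map
`g(t) = ∫_{(a,t)} q(s) f(t-s+a) dm(s)` for `a < t ≤ b`, `g = 0` on `[a-h,a]`,
is continuous. -/
theorem stmt_11 (n : ℕ) (h : ℝ) (hh : 0 < h) (a b : ℝ) (hab : a < b)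
    (f : ℝ → Fin n → ℂ) (hfA : PropA fun x : Set.Icc (a - h) b => f ↑x)
    (hf0 : ∀ r ∈ Set.Ico (a - h) a, f r = 0)
    (q : ℝ → ℂ) (hq : ContinuousOn q (Set.Icc a b)) :
    ContinuousOn
      (fun t => if a < t then (∫ s in Set.Ioo a t, q s • f (t - s + a)) else 0)
      (Set.Icc (a - h) b) :=
  stmt_11_general n h hh a b f hfA q hq
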